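/- Let (X,⊥) be a homogeneously transitive orthoset containing four mutually orthogonal elements. Let e₁,…,e_k (k ≥ 1) be mutually orthogonal elements of X, let A = {e₁,…,e_k}^⊥⊥, and let Q ⊆ A be a set of mutually orthogonal elements. Then Q has at most k elements, and Q^⊥⊥ = A if and only if Q has exactly k elements. -/

import Mathlib

/-- An automorphism of the orthoset `(X, perp)`. -/
def IsOrthoAuto {X : Type*} (perp : X → X → Prop) (φ : Equiv.Perm X) : Prop :=
  ∀ p q : X, perp p q ↔ perp (φ p) (φ q)

/-- The group `G_{ef}`. -/
def Gef {X : Type*} (perp : X → X → Prop) (e f : X) : Set (Equiv.Perm X) :=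
  {φ | IsOrthoAuto perp φ ∧ ∀ x : X, perp x e → perp x f → φ x = x}

/-- Homogeneous transitivity: (HT1) and (HT2). -/
def HomTrans {X : Type*} (perp : X → X → Prop) : Prop :=
  ∀ e f : X, e ≠ f →
    (∃ φ ∈ Gef perp e f, φ e = f) ∧
    (∀ e' f' : X, e' ≠ f' → ∃ τ : Equiv.Perm X, IsOrthoAuto perp τ ∧ τ e = e' ∧
      Gef perp e f = (fun φ => τ⁻¹ * φ * τ) '' Gef perp e' f')

/-- The orthocomplement of a subset of an orthoset. -/
def pperp {X : Type*} (perp : X → X → Prop) (A : Set X) : Set X :=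
  {q | ∀ p ∈ A, perp q p}

section Helpers

variable {X : Type*} {perp : X → X → Prop}

lemma mem_pperp {A : Set X} {x : X} : x ∈ pperp perp A ↔ ∀ p ∈ A, perp x p := Iff.rfl

lemma pperp_anti {A B : Set X} (h : A ⊆ B) : pperp perp B ⊆ pperp perp A :=
  fun _ hx p hp => hx p (h hp)

lemma subset_pperp_pperp (hsymm : ∀ x y : X, perp x y → perp y x) {A : Set X} : A ⊆ pperp perp (pperp perp A) :=
  fun a ha _ hq => hsymm _ _ (hq a ha)

lemma pperp_pperp_pperp (hsymm : ∀ x y : X, perp x y → perp y x) (A : Set X) :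
    pperp perp (pperp perp (pperp perp A)) = pperp perp A :=
  Set.Subset.antisymm (pperp_anti (subset_pperp_pperp hsymm)) (subset_pperp_pperp hsymm)

lemma isOrthoAuto_inv {φ : Equiv.Perm X} (hφ : IsOrthoAuto perp φ) :
    IsOrthoAuto perp φ⁻¹ := by
  intro p q
  have := hφ (φ⁻¹ p) (φ⁻¹ q)
  simpa using this.symm

lemma image_pperp {φ : Equiv.Perm X} (hφ : IsOrthoAuto perp φ) (A : Set X) :
    φ '' pperp perp A = pperp perp (φ '' A) := by
  ext y
  constructor
  · rintro ⟨x, hx, rfl⟩ p ⟨a, ha, rfl⟩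
    exact (hφ x a).mp (hx a ha)
  · intro h
    refine ⟨φ⁻¹ y, fun a ha => ?_, by simp⟩
    have hy : perp y (φ a) := h (φ a) ⟨a, ha, rfl⟩
    have := (hφ (φ⁻¹ y) a).mpr
    apply this
    simpa using hy

lemma image_fixed {φ : Equiv.Perm X} {S : Set X} (h : ∀ x ∈ S, φ x = x) :
    φ '' S = S := by
  apply Set.Subset.antisymm
  · rintro _ ⟨x, hx, rfl⟩; rw [h x hx]; exact hx
  · intro x hx; exact ⟨x, hx, h x hx⟩

/-- Orbit of `e` under `G_{ef}` is the `⊥⊥`-closure of `{e,f}`. -/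
lemma orbit_eq (hsymm : ∀ x y : X, perp x y → perp y x) (hht : HomTrans perp) {e f : X} (hef : e ≠ f) :
    {x | ∃ φ ∈ Gef perp e f, φ e = x} = pperp perp (pperp perp ({e, f} : Set X)) := by
  apply Set.Subset.antisymm
  · rintro x ⟨φ, ⟨hauto, hfix⟩, rfl⟩ p hp
    have hpe : perp p e := hp e (by simp)
    have hpf : perp p f := hp f (by simp)
    have hfp : φ p = p := hfix p hpe hpf
    have : perp (φ e) (φ p) := (hauto e p).mp (hsymm _ _ hpe)
    rwa [hfp] at this
  · intro v hv
    by_cases hve : v = e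
    · exact ⟨1, ⟨fun p q => by simp [Equiv.Perm.one_def], fun x _ _ => rfl⟩, hve.symm⟩
    · obtain ⟨φ, ⟨hauto, hfix⟩, hφe⟩ := (hht e v (Ne.symm hve)).1
      refine ⟨φ, ⟨hauto, fun x hxe hxf => ?_⟩, hφe⟩
      have hxv : perp x v := hsymm _ _ (hv x (fun q hq => by
        rcases hq with h | h
        · rw [h]; exact hxe
        · rw [Set.mem_singleton_iff.mp h]; exact hxf))
      exact hfix x hxe hxv

/-- Line lemma: every "line" `{u,v}^⊥⊥` can be spanned by an orthogonal pair through `u`. -/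
lemma line_lem (hsymm : ∀ x y : X, perp x y → perp y x) (hirr : ∀ x : X, ¬ perp x x) (hht : HomTrans perp)
    {a b : X} (hab : perp a b) {u v : X} (huv : u ≠ v) :
    ∃ z, perp u z ∧
      pperp perp (pperp perp ({u, v} : Set X)) = pperp perp (pperp perp ({u, z} : Set X)) := by
  have hane : a ≠ b := fun h => hirr a (h ▸ hab)
  obtain ⟨τ, hτ, hτa, hG⟩ := (hht a b hane).2 u v huv
  have hub : perp u (τ b) := by
    have := (hτ a b).mp hab
    rwa [hτa] at this
  refine ⟨τ b, hub, ?_⟩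
  have horb : τ '' {x | ∃ φ ∈ Gef perp a b, φ a = x}
        = {x | ∃ φ ∈ Gef perp u v, φ u = x} := by
      ext y
      constructor
      · rintro ⟨x, ⟨φ, hφ, rfl⟩, rfl⟩
        rw [hG] at hφ
        obtain ⟨ψ, hψ, rfl⟩ := hφ
        refine ⟨ψ, hψ, ?_⟩
        simp only [Equiv.Perm.mul_apply, hτa] at *
        simp [hτa]
      · rintro ⟨ψ, hψ, rfl⟩
        refine ⟨(τ⁻¹ * ψ * τ) a, ⟨τ⁻¹ * ψ * τ, ?_, rfl⟩, ?_⟩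
        · rw [hG]; exact ⟨ψ, hψ, rfl⟩
        · simp [Equiv.Perm.mul_apply, hτa]
  have h1 := orbit_eq hsymm hht hane
  have h2 := orbit_eq hsymm hht huv
  rw [h1, h2] at horb
  rw [image_pperp hτ, image_pperp hτ] at horb
  have himg : τ '' ({a, b} : Set X) = ({u, τ b} : Set X) := by
    rw [Set.image_pair, hτa]
  rw [himg] at horb
  exact horb.symm

lemma main_induction (hht : HomTrans perp)
    (hsymm : ∀ x y : X, perp x y → perp y x)
    (hirr : ∀ x : X, ¬ perp x x)
    {a b : X} (hab : perp a b) :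
    ∀ k : ℕ, ∀ e : Fin k → X, (∀ i j : Fin k, i ≠ j → perp (e i) (e j)) →
      ∀ Q : Set X, Q ⊆ pperp perp (pperp perp (Set.range e)) →
        (∀ p ∈ Q, ∀ q ∈ Q, p ≠ q → perp p q) →
      Q.encard ≤ k ∧
      (pperp perp (pperp perp Q) = pperp perp (pperp perp (Set.range e)) ↔
        Q.encard = k) := by
  have hpempty : pperp perp (pperp perp (∅ : Set X)) = (∅ : Set X) := by
    ext x
    simp only [pperp, Set.mem_setOf_eq, Set.mem_empty_iff_false, iff_false]
    intro h
    exact hirr x (h x (fun p hp => hp.elim))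
  intro k
  induction k with
  | zero =>
    intro e he Q hQA hQ
    rw [Set.range_eq_empty e, hpempty] at hQA
    rw [Set.subset_empty_iff] at hQA
    subst hQA
    simp [Set.range_eq_empty e, hpempty]
  | succ k ih =>
    intro e he Q hQA hQ
    set A := pperp perp (pperp perp (Set.range e)) with hAdef
    set e' : Fin k → X := Fin.tail e with he'def
    have he' : ∀ i j : Fin k, i ≠ j → perp (e' i) (e' j) := fun i j hij =>
      he i.succ j.succ (fun h => hij (Fin.succ_injective _ h))
    set A' := pperp perp (pperp perp (Set.range e')) with hA'def
    have hrange : Set.range e = insert (e 0) (Set.range e') := Fin.range_fin_succ e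
    have he0perp : e 0 ∈ pperp perp (Set.range e') := by
      rintro p ⟨i, rfl⟩
      exact he 0 i.succ (fun h => (Fin.succ_ne_zero i) h.symm)
    have hA'A : A' ⊆ A := by
      apply pperp_anti
      apply pperp_anti
      rw [hrange]
      exact Set.subset_insert _ _
    have step2 : ∀ x ∈ A, perp x (e 0) → x ∈ A' := by
      intro x hxA hx0 y hy
      by_cases hy0 : perp y (e 0)
      · apply hxA
        intro p hp
        rw [hrange] at hp
        rcases hp with h | h
        · rw [h]; exact hy0
        · exact hy p h
      · by_cases hye : y = e 0
        · rw [hye]; exact hx0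
        · obtain ⟨z, hz0, hzeq⟩ := line_lem hsymm hirr hht hab (Ne.symm hye)
          have hz_in : z ∈ pperp perp (pperp perp ({e 0, y} : Set X)) := by
            rw [hzeq]
            exact subset_pperp_pperp hsymm (by simp)
          have hsub : ({e 0, y} : Set X) ⊆ pperp perp (Set.range e') := by
            rintro p (h | h)
            · rw [h]; exact he0perp
            · rw [Set.mem_singleton_iff.mp h]; exact hy
          have hz_perp' : z ∈ pperp perp (Set.range e') := by
            have h1 : pperp perp (pperp perp ({e 0, y} : Set X)) ⊆
                pperp perp (pperp perp (pperp perp (Set.range e'))) :=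
              pperp_anti (pperp_anti hsub)
            rw [pperp_pperp_pperp hsymm] at h1
            exact h1 hz_in
          have hzE : z ∈ pperp perp (Set.range e) := by
            rw [hrange]; rintro p (h | h)
            · rw [h]; exact hsymm _ _ hz0
            · exact hz_perp' p h
          have hxz : perp x z := hxA z hzE
          have hy_in : y ∈ pperp perp (pperp perp ({e 0, z} : Set X)) := by
            rw [← hzeq]; exact subset_pperp_pperp hsymm (by simp)
          have hx_in : x ∈ pperp perp ({e 0, z} : Set X) := by
            rintro p (h | h)
            · rw [h]; exact hx0
            · rw [Set.mem_singleton_iff.mp h]; exact hxz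
          exact hsymm _ _ (hy_in x hx_in)
    rcases Q.eq_empty_or_nonempty with rfl | ⟨q₁, hq₁⟩
    · refine ⟨by simp, ?_⟩
      rw [hpempty, Set.encard_empty]
      constructor
      · intro h
        have he0A : e 0 ∈ A := subset_pperp_pperp hsymm ⟨0, rfl⟩
        rw [← h] at he0A
        exact absurd he0A (Set.notMem_empty _)
      · intro h
        exact absurd h.symm (by simp)
    · have hexφ : ∃ φ : Equiv.Perm X, IsOrthoAuto perp φ ∧ φ q₁ = e 0 ∧
          ∀ x ∈ pperp perp (Set.range e), φ x = x := by
        by_cases hq : q₁ = e 0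
        · exact ⟨1, fun p q => by simp, by simp [hq], fun x _ => rfl⟩
        · obtain ⟨φ', ⟨hauto, hfix⟩, hφe⟩ := (hht (e 0) q₁ (Ne.symm hq)).1
          refine ⟨φ'⁻¹, isOrthoAuto_inv hauto, ?_, ?_⟩
          · rw [← hφe]; simp
          · intro x hx
            have hx0 : perp x (e 0) := hx (e 0) ⟨0, rfl⟩
            have hxq : perp x q₁ := hsymm _ _ (hQA hq₁ x hx)
            have hfx := hfix x hx0 hxq
            conv_lhs => rw [← hfx]
            simp
      obtain ⟨φ, hφ, hφq, hfixφ⟩ := hexφ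
      set Q' := φ '' (Q \ {q₁}) with hQ'def
      have hAimg : φ '' A = A := by
        rw [hAdef, image_pperp hφ, image_fixed hfixφ]
      have hQ'sub : Q' ⊆ A := by
        rintro _ ⟨p, hp, rfl⟩
        rw [← hAimg]
        exact ⟨p, hQA hp.1, rfl⟩
      have hQ'0 : ∀ q ∈ Q', perp q (e 0) := by
        rintro _ ⟨p, hp, rfl⟩
        rw [← hφq]
        exact (hφ p q₁).mp (hQ p hp.1 q₁ hq₁ hp.2)
      have hQ'A' : Q' ⊆ A' := fun q hq => step2 q (hQ'sub hq) (hQ'0 q hq)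
      have hQ'orth : ∀ p ∈ Q', ∀ q ∈ Q', p ≠ q → perp p q := by
        rintro _ ⟨p, hp, rfl⟩ _ ⟨q, hq, rfl⟩ hne
        exact (hφ p q).mp (hQ p hp.1 q hq.1 (fun h => hne (by rw [h])))
      obtain ⟨ih1, ih2⟩ := ih e' he' Q' hQ'A' hQ'orth
      have hcard : Q.encard = Q'.encard + 1 := by
        rw [hQ'def, φ.injective.encard_image (Q \ {q₁}),
          Set.encard_diff_singleton_add_one hq₁]
      constructor
      · rw [hcard]
        push_cast
        exact add_le_add_left ih1 1
      · have hQdecomp : Q = insert q₁ (Q \ {q₁}) := by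
          rw [Set.insert_diff_singleton, Set.insert_eq_self.mpr hq₁]
        have himgQ : φ '' Q = insert (e 0) Q' := by
          conv_lhs => rw [hQdecomp]
          rw [Set.image_insert_eq, hφq]
        have mem_pperp_insert : ∀ (w : X) (S : Set X),
            w ∈ pperp perp (insert (e 0) S) ↔ perp w (e 0) ∧ w ∈ pperp perp S := by
          intro w S
          constructor
          · intro h
            exact ⟨h (e 0) (Set.mem_insert _ _), fun p hp => h p (Set.mem_insert_of_mem _ hp)⟩
          · rintro ⟨h1, h2⟩ p hp
            rcases hp with h | h
            · rw [h]; exact h1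
            · exact h2 p h
        have key1 : (pperp perp (pperp perp Q) = A) ↔
            (pperp perp (pperp perp (insert (e 0) Q')) = A) := by
          have h2 : pperp perp (pperp perp (insert (e 0) Q'))
              = φ '' (pperp perp (pperp perp Q)) := by
            rw [← himgQ, ← image_pperp hφ, ← image_pperp hφ]
          rw [h2]
          nth_rewrite 2 [← hAimg]
          exact (Set.image_eq_image φ.injective).symm
        have hA'cl : pperp perp (pperp perp A') = A' :=
          pperp_pperp_pperp hsymm (pperp perp (Set.range e'))
        have key2 : (pperp perp (pperp perp (insert (e 0) Q')) = A) ↔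
            (pperp perp (pperp perp Q') = A') := by
          constructor
          · intro hins
            apply Set.Subset.antisymm
            · have hmono : pperp perp (pperp perp Q') ⊆ pperp perp (pperp perp A') :=
                pperp_anti (pperp_anti hQ'A')
              rwa [hA'cl] at hmono
            · intro x hx
              have hxA : x ∈ A := hA'A hx
              have hxIns : x ∈ pperp perp (pperp perp (insert (e 0) Q')) := by
                rw [hins]; exact hxA
              have hx0 : perp x (e 0) := hx (e 0) he0perp
              intro w hw
              by_cases hw0 : perp w (e 0)
              · exact hxIns w ((mem_pperp_insert w Q').mpr ⟨hw0, hw⟩)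
              · by_cases hwe : w = e 0
                · rw [hwe]; exact hx0
                · obtain ⟨z, hz0, hzeq⟩ := line_lem hsymm hirr hht hab (Ne.symm hwe)
                  have hz_in : z ∈ pperp perp (pperp perp ({e 0, w} : Set X)) := by
                    rw [hzeq]; exact subset_pperp_pperp hsymm (by simp)
                  have hsub : ({e 0, w} : Set X) ⊆ pperp perp Q' := by
                    rintro p (h | h)
                    · rw [h]; intro q hq; exact hsymm _ _ (hQ'0 q hq)
                    · rw [Set.mem_singleton_iff.mp h]; exact hw
                  have hzQ' : z ∈ pperp perp Q' := by
                    have h1 : pperp perp (pperp perp ({e 0, w} : Set X)) ⊆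
                        pperp perp (pperp perp (pperp perp Q')) :=
                      pperp_anti (pperp_anti hsub)
                    rw [pperp_pperp_pperp hsymm] at h1
                    exact h1 hz_in
                  have hxz : perp x z :=
                    hxIns z ((mem_pperp_insert z Q').mpr ⟨hsymm _ _ hz0, hzQ'⟩)
                  have hw_in : w ∈ pperp perp (pperp perp ({e 0, z} : Set X)) := by
                    rw [← hzeq]; exact subset_pperp_pperp hsymm (by simp)
                  have hx_in2 : x ∈ pperp perp ({e 0, z} : Set X) := by
                    rintro p (h | h)
                    · rw [h]; exact hx0
                    · rw [Set.mem_singleton_iff.mp h]; exact hxz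
                  exact hsymm _ _ (hw_in x hx_in2)
          · intro hQ''
            have hpQ' : pperp perp Q' = pperp perp (Set.range e') := by
              calc pperp perp Q'
                  = pperp perp (pperp perp (pperp perp Q')) :=
                    (pperp_pperp_pperp hsymm Q').symm
                _ = pperp perp A' := by rw [hQ'']
                _ = pperp perp (Set.range e') := pperp_pperp_pperp hsymm (Set.range e')
            have hkey : pperp perp (insert (e 0) Q') = pperp perp (Set.range e) := by
              ext w
              rw [hrange, mem_pperp_insert, mem_pperp_insert, hpQ']
            rw [hAdef, ← hkey]
        rw [key1, key2, ih2, hcard]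
        push_cast
        constructor
        · intro h; rw [h]
        · intro h; exact WithTop.add_right_cancel ENat.one_ne_top h

end Helpers

theorem stmt_13 {X : Type*} [Nonempty X] (perp : X → X → Prop)
    (hsymm : ∀ x y : X, perp x y → perp y x)
    (hirr : ∀ x : X, ¬ perp x x)
    (hht : HomTrans perp)
    (hrank : ∃ a b c d : X,
      perp a b ∧ perp a c ∧ perp a d ∧ perp b c ∧ perp b d ∧ perp c d)
    (k : ℕ) (hk : 1 ≤ k) (e : Fin k → X)
    (he : ∀ i j : Fin k, i ≠ j → perp (e i) (e j))
    (Q : Set X)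
    (hQA : Q ⊆ pperp perp (pperp perp (Set.range e)))
    (hQ : ∀ p ∈ Q, ∀ q ∈ Q, p ≠ q → perp p q) :
    Q.encard ≤ k ∧
    (pperp perp (pperp perp Q) = pperp perp (pperp perp (Set.range e)) ↔
      Q.encard = k) := by
  obtain ⟨a, b, c, d, hab, -⟩ := hrank
  exact main_induction hht hsymm hirr hab k e he Q hQA hQ
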